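/- The genus σ(T) of a based matrix T over an integral domain R is a homology invariant: homologous based matrices have equal genus. -/

import Mathlib

/-!  Based skew-symmetric matrices over an abelian group `H`, after Turaev.
A based matrix is a triple `(G, s, b)` where `G` is a finite set, `s ∈ G`,
and `b : G × G → H` is skew-symmetric.  We realize the finite set `G` as a
finite set of natural numbers; the values of `b` outside `G` are irrelevant
(isomorphism, homology, fillings etc. only refer to values on `G`). -/

/-- The data of a based matrix over `H`: a finite carrier `G ⊆ ℕ`, a base
point `s` and a pairing `b`. -/
structure PreBM (H : Type*) where
  /-- the underlying finite set -/
  G : Finset ℕ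
  /-- the base point `s` -/
  s : ℕ
  /-- the pairing -/
  b : ℕ → ℕ → H

variable {H : Type*} [AddCommGroup H]

/-- `(G, s, b)` is a based matrix: `s ∈ G` and `b` is skew-symmetric on `G`
(with vanishing diagonal). -/
def IsBM (T : PreBM H) : Prop :=
  T.s ∈ T.G ∧ (∀ g ∈ T.G, ∀ h ∈ T.G, T.b g h = -T.b h g) ∧
    ∀ g ∈ T.G, T.b g g = 0

/-- Isomorphism of based matrices: a bijection of the carriers preserving the
base point and the pairing. -/
def BMIso (T T' : PreBM H) : Prop :=
  ∃ f : ℕ → ℕ, Set.BijOn f (T.G : Set ℕ) (T'.G : Set ℕ) ∧ f T.s = T'.s ∧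
    ∀ g ∈ T.G, ∀ h ∈ T.G, T'.b (f g) (f h) = T.b g h

/-- `g` is an annihilating element of `T`. -/
def Annihilating (T : PreBM H) (g : ℕ) : Prop :=
  g ∈ T.G ∧ g ≠ T.s ∧ ∀ h ∈ T.G, T.b g h = 0

/-- `g` is a core element of `T`. -/
def CoreElt (T : PreBM H) (g : ℕ) : Prop :=
  g ∈ T.G ∧ g ≠ T.s ∧ ∀ h ∈ T.G, T.b g h = T.b T.s h

/-- `g₁, g₂` is a complementary pair of elements of `T`. -/
def ComplPair (T : PreBM H) (g₁ g₂ : ℕ) : Prop :=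
  g₁ ∈ T.G ∧ g₂ ∈ T.G ∧ g₁ ≠ T.s ∧ g₂ ≠ T.s ∧ g₁ ≠ g₂ ∧
    ∀ h ∈ T.G, T.b g₁ h + T.b g₂ h = T.b T.s h

/-- A based matrix is primitive if it has no annihilating elements, no core
elements and no complementary pairs. -/
def Primitive (T : PreBM H) : Prop :=
  (∀ g, ¬Annihilating T g) ∧ (∀ g, ¬CoreElt T g) ∧ ∀ g₁ g₂, ¬ComplPair T g₁ g₂

/-- Elementary extension `M₁`: adjoin one annihilating element. -/
def IsExt1 (T T' : PreBM H) : Prop :=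
  T'.s = T.s ∧ ∃ g, g ∉ T.G ∧ T'.G = insert g T.G ∧
    (∀ x ∈ T.G, ∀ y ∈ T.G, T'.b x y = T.b x y) ∧
    ∀ h ∈ T'.G, T'.b g h = 0

/-- Elementary extension `M₂`: adjoin one core element. -/
def IsExt2 (T T' : PreBM H) : Prop :=
  T'.s = T.s ∧ ∃ g, g ∉ T.G ∧ T'.G = insert g T.G ∧
    (∀ x ∈ T.G, ∀ y ∈ T.G, T'.b x y = T.b x y) ∧
    ∀ h ∈ T'.G, T'.b g h = T'.b T'.s h

/-- Elementary extension `M₃`: adjoin a pair of complementary elements. -/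
def IsExt3 (T T' : PreBM H) : Prop :=
  T'.s = T.s ∧ ∃ g₁ g₂, g₁ ∉ T.G ∧ g₂ ∉ T.G ∧ g₁ ≠ g₂ ∧
    T'.G = insert g₁ (insert g₂ T.G) ∧
    (∀ x ∈ T.G, ∀ y ∈ T.G, T'.b x y = T.b x y) ∧
    ∀ h ∈ T'.G, T'.b g₁ h + T'.b g₂ h = T'.b T'.s h

/-- One elementary extension between based matrices. -/
def StepExt (T T' : PreBM H) : Prop :=
  IsBM T ∧ IsBM T' ∧ (IsExt1 T T' ∨ IsExt2 T T' ∨ IsExt3 T T')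

/-- Two based matrices are homologous if they are related by a finite
sequence of elementary extensions, inverse extensions and isomorphisms. -/
def Homologous : PreBM H → PreBM H → Prop :=
  Relation.EqvGen fun T T' => StepExt T T' ∨ (IsBM T ∧ IsBM T' ∧ BMIso T T')
variable {R : Type*} [CommRing R] [IsDomain R]

/-- `b(X, Y) = ∑_{g ∈ X, h ∈ Y} b(g, h)` for subsets `X, Y` of the carrier. -/
def bSet (T : PreBM R) (X Y : Finset ℕ) : R := ∑ g ∈ X, ∑ h ∈ Y, T.b g h

/-- A simple filling of `T = (G, s, b)`: a finite family of disjoint subsets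
of `G`, each of cardinality at most `2`, whose union is `G` and one of which
is `{s}`. -/
def IsSimpleFilling (T : PreBM R) (P : Finset (Finset ℕ)) : Prop :=
  ({T.s} : Finset ℕ) ∈ P ∧ (∀ X ∈ P, X.card ≤ 2) ∧
    (∀ X ∈ P, ∀ Y ∈ P, X ≠ Y → Disjoint X Y) ∧ P.biUnion id = T.G

/-- Half the rank of the skew-symmetric matrix `(b(X_i, X_j))_{i,j}` of a
simple filling. -/
noncomputable def sigmaFill (T : PreBM R) (P : Finset (Finset ℕ)) : ℕ :=
  (Matrix.of fun X Y : {A // A ∈ P} => bSet T X.1 Y.1).rank / 2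

/-- The genus `σ(T)` of a based matrix: the minimum of `σ(𝒳)` over all simple
fillings `𝒳` of `T`. -/
noncomputable def bmGenus (T : PreBM R) : ℕ :=
  sInf {n : ℕ | ∃ P : Finset (Finset ℕ), IsSimpleFilling T P ∧ n = sigmaFill T P}

/-!
Encode a block `X` by its indicator vector `𝟙 X : ℕ → R` and let `b` define a bilinear form on
`ℕ → R`; then `σ` of a filling is half the rank of the Gram matrix of its indicator vectors. A Gram
matrix does not gain rank when its vectors are replaced by vectors in the span of the old ones
modulo the kernel of the form.

Each elementary extension `T → T'` adjoins a set `N` of at most two elements with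
`𝟙 N ≡ ε • 𝟙 {s}` modulo the kernel of the form of `T'`. Adding the block `N` to a filling of `T`,
or deleting `N` from a filling of `T'` and merging what is left of the blocks that met `N`, thus
gives a filling whose vectors lie in the span of the old ones modulo the kernel, so neither
direction raises `σ`. Isomorphisms transport fillings together with their Gram matrices.
-/

theorem Matrix.rank_gram_le_of_mem_span_sup_ker {K V ι κ : Type*} [CommRing K]
    [StrongRankCondition K] [AddCommGroup V] [Module K V] [Fintype ι] [Fintype κ]
    {β : V →ₗ[K] V →ₗ[K] K} (hβ : β.IsRefl) {u : ι → V} {w : κ → V}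
    (hu : ∀ i, u i ∈ Submodule.span K (Set.range w) ⊔ LinearMap.ker β) :
    (Matrix.of fun i j => β (u i) (u j)).rank ≤ (Matrix.of fun k l => β (w k) (w l)).rank := by
  have hcoeff : ∀ i, ∃ c : κ → K, ∀ x,
      β (u i) x = ∑ k, c k * β (w k) x ∧ β x (u i) = ∑ k, c k * β x (w k) := by
    intro i
    obtain ⟨y, hy, r, hr, hyr⟩ := Submodule.mem_sup.mp (hu i)
    obtain ⟨c, rfl⟩ := (Submodule.mem_span_range_iff_exists_fun K).mp hy
    have hr' : ∀ x, β r x = 0 := fun x => by rw [LinearMap.mem_ker.mp hr, LinearMap.zero_apply]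
    refine ⟨c, fun x => ⟨?_, ?_⟩⟩
    · simp [← hyr, hr']
    · simp [← hyr, hβ _ _ (hr' x)]
  choose c hc using hcoeff
  have hgram : (Matrix.of fun i j => β (u i) (u j)) =
      Matrix.of c * (Matrix.of fun k l => β (w k) (w l)) * (Matrix.of c).transpose := by
    ext i j
    simp only [Matrix.mul_apply, Matrix.of_apply, Matrix.transpose_apply, (hc i _).1,
      (hc j _).2, Finset.mul_sum, Finset.sum_mul]
    rw [Finset.sum_comm]
    exact Finset.sum_congr rfl fun _ _ => Finset.sum_congr rfl fun _ _ => by ring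
  rw [hgram]
  exact (Matrix.rank_mul_le_left _ _).trans (Matrix.rank_mul_le_right _ _)

section

variable {S : Type*}

theorem IsSimpleFilling.subset {T : PreBM S} {P : Finset (Finset ℕ)} (hP : IsSimpleFilling T P)
    {X : Finset ℕ} (hX : X ∈ P) : X ⊆ T.G :=
  hP.2.2.2 ▸ Finset.subset_biUnion_of_mem id hX

theorem exists_isSimpleFilling {T : PreBM S} (hs : T.s ∈ T.G) : ∃ P, IsSimpleFilling T P := by
  refine ⟨T.G.image ({·}), Finset.mem_image_of_mem _ hs, ?_, ?_, ?_⟩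
  · simp
  · simp only [Finset.mem_image]
    rintro _ ⟨x, -, rfl⟩ _ ⟨y, -, rfl⟩ hxy
    exact Finset.disjoint_singleton.mpr fun h => hxy (h ▸ rfl)
  · ext; simp

theorem IsSimpleFilling.insert {T T' : PreBM S} {P : Finset (Finset ℕ)} (hP : IsSimpleFilling T P)
    {N : Finset ℕ} (hN : N.card ≤ 2) (hNG : Disjoint N T.G) (hs : T'.s = T.s)
    (hG : T'.G = N ∪ T.G) : IsSimpleFilling T' (insert N P) := by
  refine ⟨hs ▸ Finset.mem_insert_of_mem hP.1, ?_, ?_, ?_⟩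
  · simpa [hN] using hP.2.1
  · have hdisj : ∀ Y ∈ P, Disjoint N Y := fun Y hY => hNG.mono_right (hP.subset hY)
    simp only [Finset.mem_insert]
    rintro X (rfl | hX) Y (rfl | hY) hXY
    exacts [absurd rfl hXY, hdisj Y hY, (hdisj X hX).symm, hP.2.2.1 X hX Y hY hXY]
  · rw [Finset.biUnion_insert, hP.2.2.2, hG, id]

theorem card_biUnion_sdiff_le {P : Finset (Finset ℕ)} (hP : ∀ X ∈ P, X.card ≤ 2)
    (hdisj : ∀ X ∈ P, ∀ Y ∈ P, X ≠ Y → Disjoint X Y) (N : Finset ℕ) :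
    ((P.filter (¬Disjoint · N)).biUnion (· \ N)).card ≤ N.card := by
  set M := P.filter (¬Disjoint · N)
  have hblock : ∀ X ∈ M, (X \ N).card ≤ (X ∩ N).card := fun X hX => by
    obtain ⟨hXP, hXN⟩ := Finset.mem_filter.mp hX
    have := Finset.card_sdiff_add_card_inter X N
    have := (Finset.not_disjoint_iff_nonempty_inter.mp hXN).card_pos
    have := hP X hXP
    omega
  have hM : (M : Set (Finset ℕ)).PairwiseDisjoint (· ∩ N) := fun X hX Y hY hXY =>
    (hdisj X (Finset.mem_filter.mp hX).1 Y (Finset.mem_filter.mp hY).1 hXY).mono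
      Finset.inter_subset_left Finset.inter_subset_left
  calc (M.biUnion (· \ N)).card ≤ ∑ X ∈ M, (X \ N).card := Finset.card_biUnion_le
    _ ≤ ∑ X ∈ M, (X ∩ N).card := Finset.sum_le_sum hblock
    _ = (M.biUnion (· ∩ N)).card := (Finset.card_biUnion hM).symm
    _ ≤ N.card := Finset.card_le_card (Finset.biUnion_subset.mpr fun _ _ =>
        Finset.inter_subset_right)

def mergeErase (P : Finset (Finset ℕ)) (N : Finset ℕ) : Finset (Finset ℕ) :=
  insert ((P.filter (¬Disjoint · N)).biUnion (· \ N)) (P.filter (Disjoint · N))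

theorem biUnion_mergeErase (P : Finset (Finset ℕ)) (N : Finset ℕ) :
    (mergeErase P N).biUnion id = P.biUnion id \ N := by
  ext a
  simp only [mergeErase, Finset.biUnion_insert, Finset.mem_union, Finset.mem_biUnion,
    Finset.mem_filter, Finset.mem_sdiff, id]
  constructor
  · rintro (⟨X, ⟨hXP, -⟩, haX, haN⟩ | ⟨X, ⟨hXP, hXN⟩, haX⟩)
    · exact ⟨⟨X, hXP, haX⟩, haN⟩
    · exact ⟨⟨X, hXP, haX⟩, Finset.disjoint_left.mp hXN haX⟩
  · rintro ⟨⟨X, hXP, haX⟩, haN⟩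
    by_cases hXN : Disjoint X N
    · exact Or.inr ⟨X, ⟨hXP, hXN⟩, haX⟩
    · exact Or.inl ⟨X, ⟨hXP, hXN⟩, haX, haN⟩

theorem IsSimpleFilling.mergeErase {T T' : PreBM S} {P : Finset (Finset ℕ)}
    (hP : IsSimpleFilling T' P) {N : Finset ℕ} (hN : N.card ≤ 2) (hsN : T'.s ∉ N)
    (hs : T.s = T'.s) (hG : T.G = T'.G \ N) : IsSimpleFilling T (mergeErase P N) := by
  have hdisjP := hP.2.2.1
  refine ⟨Finset.mem_insert_of_mem (Finset.mem_filter.mpr ⟨hs ▸ hP.1, by simpa [hs] using hsN⟩),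
    ?_, ?_, by rw [biUnion_mergeErase, hP.2.2.2, hG]⟩
  · simp only [_root_.mergeErase, Finset.mem_insert, Finset.mem_filter]
    rintro X (rfl | hX)
    exacts [(card_biUnion_sdiff_le hP.2.1 hdisjP N).trans hN, hP.2.1 X hX.1]
  · have hmerged : ∀ Y ∈ P, Disjoint Y N →
        Disjoint ((P.filter (¬Disjoint · N)).biUnion (· \ N)) Y := fun Y hY hYN => by
      refine (Finset.disjoint_biUnion_left _ _ _).mpr fun X hX => ?_
      obtain ⟨hXP, hXN⟩ := Finset.mem_filter.mp hX
      exact (hdisjP X hXP Y hY (by rintro rfl; exact hXN hYN)).mono_left Finset.sdiff_subset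
    simp only [_root_.mergeErase, Finset.mem_insert, Finset.mem_filter]
    rintro X (rfl | hX) Y (rfl | hY) hXY
    exacts [absurd rfl hXY, hmerged Y hY.1 hY.2, (hmerged X hX.1 hX.2).symm,
      hdisjP X hX.1 Y hY.1 hXY]

theorem IsSimpleFilling.image {T T' : PreBM S} {P : Finset (Finset ℕ)} (hP : IsSimpleFilling T P)
    {f : ℕ → ℕ} (hf : Set.BijOn f T.G T'.G) (hs : f T.s = T'.s) :
    IsSimpleFilling T' (P.image (Finset.image f)) := by
  refine ⟨Finset.mem_image.mpr ⟨{T.s}, hP.1, by simp [hs]⟩, ?_, ?_, ?_⟩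
  · simp only [Finset.mem_image]
    rintro _ ⟨X, hX, rfl⟩
    exact Finset.card_image_le.trans (hP.2.1 X hX)
  · simp only [Finset.mem_image]
    rintro _ ⟨X, hX, rfl⟩ _ ⟨Y, hY, rfl⟩ hXY
    have hdisj := hP.2.2.1 X hX Y hY (by rintro rfl; exact hXY rfl)
    simp only [Finset.disjoint_left, Finset.mem_image]
    rintro _ ⟨x, hx, rfl⟩ ⟨y, hy, hxy⟩
    rw [hf.injOn (hP.subset hY hy) (hP.subset hX hx) hxy] at hy
    exact Finset.disjoint_left.mp hdisj hx hy
  · rw [Finset.image_biUnion, ← Finset.coe_inj, ← hf.image_eq, ← hP.2.2.2, ← Finset.coe_image,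
      Finset.biUnion_image]
    rfl

theorem BMIso.symm {T T' : PreBM S} (hs : T.s ∈ T.G) (h : BMIso T T') : BMIso T' T := by
  obtain ⟨f, hf, hfs, hfb⟩ := h
  have hinv := hf.invOn_invFunOn
  have hf' := hf.symm hinv.symm
  refine ⟨Function.invFunOn f T.G, hf', hfs ▸ hinv.1 hs, fun x hx y hy => ?_⟩
  rw [← hfb _ (hf'.mapsTo hx) _ (hf'.mapsTo hy), hinv.2 hx, hinv.2 hy]

end

section

variable {S : Type*} [CommRing S]

local notation "𝟙" X:max => Set.indicator ((X : Finset ℕ) : Set ℕ) (1 : ℕ → S)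

namespace PreBM

def pairing (T : PreBM S) : (ℕ → S) →ₗ[S] (ℕ → S) →ₗ[S] S :=
  LinearMap.mk₂ S (fun u v => ∑ g ∈ T.G, ∑ h ∈ T.G, u g * v h * T.b g h)
    (fun _ _ _ => by simp only [Pi.add_apply, add_mul, Finset.sum_add_distrib])
    (fun _ _ _ => by simp only [Pi.smul_apply, smul_eq_mul, Finset.mul_sum, mul_assoc])
    (fun _ _ _ => by simp only [Pi.add_apply, mul_add, add_mul, Finset.sum_add_distrib])
    (fun _ _ _ => by
      simp only [Pi.smul_apply, smul_eq_mul, Finset.mul_sum]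
      exact Finset.sum_congr rfl fun _ _ => Finset.sum_congr rfl fun _ _ => by ring)

theorem pairing_apply (T : PreBM S) (u v : ℕ → S) :
    T.pairing u v = ∑ g ∈ T.G, ∑ h ∈ T.G, u g * v h * T.b g h := rfl

theorem pairing_swap {T : PreBM S} (hT : IsBM T) (u v : ℕ → S) :
    T.pairing u v = -T.pairing v u := by
  rw [pairing_apply, pairing_apply, Finset.sum_comm, ← Finset.sum_neg_distrib]
  refine Finset.sum_congr rfl fun h hh => ?_
  rw [← Finset.sum_neg_distrib]
  refine Finset.sum_congr rfl fun g hg => ?_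
  rw [hT.2.1 g hg h hh]
  ring

theorem isRefl_pairing {T : PreBM S} (hT : IsBM T) : T.pairing.IsRefl := fun u v h => by
  rw [pairing_swap hT, h, neg_zero]

theorem pairing_indicator_left (T : PreBM S) {X : Finset ℕ} (hX : X ⊆ T.G) (v : ℕ → S) :
    T.pairing (𝟙 X) v = ∑ h ∈ T.G, (∑ g ∈ X, T.b g h) * v h := by
  simp only [pairing_apply, Set.indicator_apply, Finset.mem_coe, Pi.one_apply, ite_mul, one_mul,
    zero_mul, Finset.sum_ite_irrel, Finset.sum_const_zero]
  rw [Finset.sum_ite_mem, Finset.inter_eq_right.mpr hX, Finset.sum_comm]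
  simp only [Finset.sum_mul]
  exact Finset.sum_congr rfl fun _ _ => Finset.sum_congr rfl fun _ _ => by ring

theorem pairing_indicator (T : PreBM S) {X Y : Finset ℕ} (hX : X ⊆ T.G) (hY : Y ⊆ T.G) :
    T.pairing (𝟙 X) (𝟙 Y) = bSet T X Y := by
  simp only [T.pairing_indicator_left hX, Set.indicator_apply, Finset.mem_coe, Pi.one_apply,
    mul_ite, mul_one, mul_zero]
  rw [Finset.sum_ite_mem, Finset.inter_eq_right.mpr hY, bSet, Finset.sum_comm]

end PreBM

theorem indicator_biUnion_sdiff {M : Finset (Finset ℕ)}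
    (hM : ∀ X ∈ M, ∀ Y ∈ M, X ≠ Y → Disjoint X Y) {N : Finset ℕ} (hN : N ⊆ M.biUnion id) :
    𝟙 (M.biUnion (· \ N)) = ∑ X ∈ M, 𝟙 X - 𝟙 N := by
  have hsdiff : M.biUnion (· \ N) = M.biUnion id \ N := by ext; aesop
  rw [hsdiff, Finset.coe_sdiff, Set.indicator_sdiff (Finset.coe_subset.mpr hN), Finset.coe_biUnion]
  simp only [Finset.mem_coe, id]
  rw [Finset.indicator_biUnion _ _ fun X hX Y hY hXY => Finset.disjoint_coe.mpr (hM X hX Y hY hXY)]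
  ext; simp [Finset.sum_apply]

theorem sigmaFill_eq_of_agree {T T' : PreBM S} (hb : ∀ x ∈ T.G, ∀ y ∈ T.G, T'.b x y = T.b x y)
    {P : Finset (Finset ℕ)} (hP : ∀ X ∈ P, X ⊆ T.G) : sigmaFill T' P = sigmaFill T P := by
  unfold sigmaFill bSet
  congr 3
  ext X Y
  exact Finset.sum_congr rfl fun x hx => Finset.sum_congr rfl fun y hy =>
    hb x (hP _ X.2 hx) y (hP _ Y.2 hy)

theorem bSet_image {T T' : PreBM S} {f : ℕ → ℕ} (hf : Set.InjOn f T.G)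
    (hb : ∀ g ∈ T.G, ∀ h ∈ T.G, T'.b (f g) (f h) = T.b g h) {X Y : Finset ℕ} (hX : X ⊆ T.G)
    (hY : Y ⊆ T.G) : bSet T' (X.image f) (Y.image f) = bSet T X Y := by
  rw [bSet, Finset.sum_image fun x hx y hy => hf (hX hx) (hX hy)]
  refine Finset.sum_congr rfl fun x hx => ?_
  rw [Finset.sum_image fun y hy z hz => hf (hY hy) (hY hz)]
  exact Finset.sum_congr rfl fun y hy => hb x (hX hx) y (hY hy)

theorem bmGenus_le_of_forall_exists {T T' : PreBM S} (hs' : T'.s ∈ T'.G)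
    (h : ∀ P', IsSimpleFilling T' P' → ∃ P, IsSimpleFilling T P ∧ sigmaFill T P ≤ sigmaFill T' P') :
    bmGenus T ≤ bmGenus T' := by
  obtain ⟨P₀, hP₀⟩ := exists_isSimpleFilling hs'
  obtain ⟨P', hP', hP'min⟩ := Nat.sInf_mem (⟨_, P₀, hP₀, rfl⟩ :
    {n | ∃ P', IsSimpleFilling T' P' ∧ n = sigmaFill T' P'}.Nonempty)
  obtain ⟨P, hP, hle⟩ := h P' hP'
  calc bmGenus T ≤ sigmaFill T P := Nat.sInf_le ⟨P, hP, rfl⟩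
    _ ≤ sigmaFill T' P' := hle
    _ = bmGenus T' := hP'min.symm

/-- The moves `M₁`, `M₂`, `M₃` are the cases `(#N, ε) = (1, 0), (1, 1), (2, 1)`. -/
structure IsExtension (T T' : PreBM S) (N : Finset ℕ) (ε : S) : Prop where
  s_eq : T'.s = T.s
  disjoint : Disjoint N T.G
  G_eq : T'.G = N ∪ T.G
  card_le : N.card ≤ 2
  b_eq : ∀ x ∈ T.G, ∀ y ∈ T.G, T'.b x y = T.b x y
  sum_b_eq : ∀ h ∈ T'.G, ∑ x ∈ N, T'.b x h = ε * T'.b T'.s h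

theorem StepExt.exists_isExtension {T T' : PreBM S} (h : StepExt T T') :
    ∃ N ε, IsExtension T T' N ε := by
  obtain ⟨-, -, ⟨hs, g, hg, hG, hb, hrow⟩ | ⟨hs, g, hg, hG, hb, hrow⟩ |
    ⟨hs, g₁, g₂, hg₁, hg₂, hg₁₂, hG, hb, hrow⟩⟩ := h
  · exact ⟨{g}, 0, hs, by simpa using hg, by rw [hG, Finset.insert_eq], by simp, hb,
      fun h hh => by simp [hrow h hh]⟩
  · exact ⟨{g}, 1, hs, by simpa using hg, by rw [hG, Finset.insert_eq], by simp, hb,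
      fun h hh => by simp [hrow h hh]⟩
  · refine ⟨{g₁, g₂}, 1, hs, by simp [hg₁, hg₂], ?_, Finset.card_le_two, hb,
      fun h hh => by simp [Finset.sum_pair hg₁₂, hrow h hh]⟩
    rw [hG]; ext; simp

namespace IsExtension

variable {T T' : PreBM S} {N : Finset ℕ} {ε : S}

theorem subset (he : IsExtension T T' N ε) : T.G ⊆ T'.G :=
  he.G_eq ▸ Finset.subset_union_right

theorem indicator_sub_mem_ker (he : IsExtension T T' N ε) (hs : T.s ∈ T.G) :
    𝟙 N - ε • 𝟙 {T'.s} ∈ LinearMap.ker T'.pairing := by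
  have hN : N ⊆ T'.G := he.G_eq ▸ Finset.subset_union_left
  have hs' : {T'.s} ⊆ T'.G := Finset.singleton_subset_iff.mpr (he.s_eq ▸ he.subset hs)
  refine LinearMap.mem_ker.mpr (LinearMap.ext fun v => ?_)
  simp only [map_sub, map_smul, LinearMap.sub_apply, LinearMap.smul_apply, LinearMap.zero_apply,
    T'.pairing_indicator_left hN, T'.pairing_indicator_left hs', Finset.sum_singleton,
    smul_eq_mul, Finset.mul_sum, sub_eq_zero]
  exact Finset.sum_congr rfl fun h hh => by rw [he.sum_b_eq h hh, mul_assoc]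

end IsExtension

variable [StrongRankCondition S]

theorem sigmaFill_le_of_mem_span_sup_ker {T : PreBM S} (hT : IsBM T) {P Q : Finset (Finset ℕ)}
    (hP : ∀ X ∈ P, X ⊆ T.G) (hQ : ∀ Y ∈ Q, Y ⊆ T.G)
    (hspan : ∀ X ∈ P, 𝟙 X ∈ Submodule.span S ((fun Y => 𝟙 Y) '' Q) ⊔ LinearMap.ker T.pairing) :
    sigmaFill T P ≤ sigmaFill T Q := by
  have hgram : ∀ Z : Finset (Finset ℕ), (∀ X ∈ Z, X ⊆ T.G) →
      (Matrix.of fun X Y : Z => bSet T X Y) = Matrix.of fun X Y : Z => T.pairing (𝟙 X) (𝟙 Y) :=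
    fun Z hZ => by ext X Y; exact (T.pairing_indicator (hZ _ X.2) (hZ _ Y.2)).symm
  refine Nat.div_le_div_right ?_
  rw [hgram P hP, hgram Q hQ]
  refine Matrix.rank_gram_le_of_mem_span_sup_ker (PreBM.isRefl_pairing hT) fun X => ?_
  have hX := hspan X.1 X.2
  rw [Set.image_eq_range] at hX
  exact hX

theorem sigmaFill_image_le {T T' : PreBM S} {f : ℕ → ℕ} (hf : Set.InjOn f T.G)
    (hb : ∀ g ∈ T.G, ∀ h ∈ T.G, T'.b (f g) (f h) = T.b g h) {P : Finset (Finset ℕ)}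
    (hP : ∀ X ∈ P, X ⊆ T.G) : sigmaFill T' (P.image (Finset.image f)) ≤ sigmaFill T P := by
  have hpre : ∀ Y : P.image (Finset.image f), ∃ X : P, X.1.image f = Y.1 := fun Y => by
    obtain ⟨X, hX, hXY⟩ := Finset.mem_image.mp Y.2
    exact ⟨⟨X, hX⟩, hXY⟩
  choose φ hφ using hpre
  have hgram : (Matrix.of fun Y Y' : P.image (Finset.image f) => bSet T' Y Y') =
      (Matrix.of fun X X' : P => bSet T X X').submatrix φ φ := by
    ext Y Y'
    rw [Matrix.submatrix_apply, Matrix.of_apply, Matrix.of_apply, ← hφ Y, ← hφ Y',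
      bSet_image hf hb (hP _ (φ Y).2) (hP _ (φ Y').2)]
  refine Nat.div_le_div_right ?_
  rw [hgram]
  exact Matrix.rank_submatrix_le _ _ _

theorem BMIso.bmGenus_le {T T' : PreBM S} (hs : T.s ∈ T.G) (h : BMIso T T') :
    bmGenus T' ≤ bmGenus T := by
  obtain ⟨f, hf, hfs, hfb⟩ := h
  exact bmGenus_le_of_forall_exists hs fun P hP =>
    ⟨_, hP.image hf hfs, sigmaFill_image_le hf.injOn hfb fun _ => hP.subset⟩

namespace IsExtension

variable {T T' : PreBM S} {N : Finset ℕ} {ε : S}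

theorem bmGenus_le (he : IsExtension T T' N ε) (hs : T.s ∈ T.G) (hT' : IsBM T') :
    bmGenus T' ≤ bmGenus T := by
  refine bmGenus_le_of_forall_exists hs fun P hP => ?_
  have hP' := hP.insert he.card_le he.disjoint he.s_eq he.G_eq
  refine ⟨insert N P, hP', ?_⟩
  have hspan : ∀ X ∈ insert N P,
      𝟙 X ∈ Submodule.span S ((fun Y => 𝟙 Y) '' P) ⊔ LinearMap.ker T'.pairing := by
    intro X hX
    rcases Finset.mem_insert.mp hX with rfl | hX
    · rw [← add_sub_cancel (ε • 𝟙 {T'.s}) (𝟙 X)]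
      refine add_mem (Submodule.mem_sup_left (Submodule.smul_mem _ _ ?_))
        (Submodule.mem_sup_right (he.indicator_sub_mem_ker hs))
      exact Submodule.subset_span ⟨{T.s}, hP.1, by rw [he.s_eq]⟩
    · exact Submodule.mem_sup_left (Submodule.subset_span ⟨X, hX, rfl⟩)
  calc sigmaFill T' (insert N P) ≤ sigmaFill T' P :=
        sigmaFill_le_of_mem_span_sup_ker hT' (fun _ => hP'.subset)
          (fun _ hX => (hP.subset hX).trans he.subset) hspan
    _ = sigmaFill T P := sigmaFill_eq_of_agree he.b_eq fun _ => hP.subset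

theorem le_bmGenus (he : IsExtension T T' N ε) (hs : T.s ∈ T.G) (hT' : IsBM T') :
    bmGenus T ≤ bmGenus T' := by
  have hsN : T'.s ∉ N := he.s_eq ▸ Finset.disjoint_right.mp he.disjoint hs
  have hG : T.G = T'.G \ N := by rw [he.G_eq, Finset.union_sdiff_cancel_left he.disjoint]
  refine bmGenus_le_of_forall_exists hT'.1 fun P' hP' => ?_
  have hP := hP'.mergeErase he.card_le hsN he.s_eq.symm hG
  refine ⟨mergeErase P' N, hP, ?_⟩
  set M := P'.filter (¬Disjoint · N)
  have hM : ∀ X ∈ M, ∀ Y ∈ M, X ≠ Y → Disjoint X Y := fun X hX Y hY =>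
    hP'.2.2.1 X (Finset.mem_filter.mp hX).1 Y (Finset.mem_filter.mp hY).1
  have hNM : N ⊆ M.biUnion id := fun g hg => by
    obtain ⟨Y, hY, hgY⟩ := Finset.mem_biUnion.mp
      (hP'.2.2.2 ▸ he.G_eq ▸ Finset.mem_union_left _ hg : g ∈ P'.biUnion id)
    exact Finset.mem_biUnion.mpr
      ⟨Y, Finset.mem_filter.mpr ⟨hY, Finset.not_disjoint_iff.mpr ⟨g, hgY, hg⟩⟩, hgY⟩
  have hspan : ∀ X ∈ mergeErase P' N,
      𝟙 X ∈ Submodule.span S ((fun Y => 𝟙 Y) '' P') ⊔ LinearMap.ker T'.pairing := by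
    simp only [mergeErase, Finset.mem_insert, Finset.mem_filter]
    rintro X (rfl | ⟨hX, -⟩)
    · rw [indicator_biUnion_sdiff hM hNM,
        ← sub_sub_sub_cancel_right _ (𝟙 N) (ε • 𝟙 {T'.s})]
      refine sub_mem (Submodule.mem_sup_left (sub_mem (Submodule.sum_mem _ fun Y hY => ?_)
        (Submodule.smul_mem _ _ (Submodule.subset_span ⟨_, hP'.1, rfl⟩))))
        (Submodule.mem_sup_right (he.indicator_sub_mem_ker hs))
      exact Submodule.subset_span ⟨Y, (Finset.mem_filter.mp hY).1, rfl⟩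
    · exact Submodule.mem_sup_left (Submodule.subset_span ⟨X, hX, rfl⟩)
  calc sigmaFill T (mergeErase P' N) = sigmaFill T' (mergeErase P' N) :=
        (sigmaFill_eq_of_agree he.b_eq fun _ => hP.subset).symm
    _ ≤ sigmaFill T' P' := sigmaFill_le_of_mem_span_sup_ker hT'
        (fun _ hX => (hP.subset hX).trans he.subset) (fun _ => hP'.subset) hspan

end IsExtension

theorem bmGenus_eq_of_step {T T' : PreBM S}
    (h : StepExt T T' ∨ (IsBM T ∧ IsBM T' ∧ BMIso T T')) : bmGenus T = bmGenus T' := by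
  rcases h with hstep | ⟨hT, hT', hiso⟩
  · obtain ⟨N, ε, he⟩ := hstep.exists_isExtension
    exact (he.le_bmGenus hstep.1.1 hstep.2.1).antisymm (he.bmGenus_le hstep.1.1 hstep.2.1)
  · exact ((hiso.symm hT.1).bmGenus_le hT'.1).antisymm (hiso.bmGenus_le hT.1)

end

theorem bmGenus_homology_invariant_general {R : Type*} [CommRing R] [IsDomain R]
    (T T' : PreBM R)
    (h : Homologous T T') : bmGenus T = bmGenus T' :=
  Setoid.eqvGen_le (s := Setoid.ker bmGenus) (fun _ _ => bmGenus_eq_of_step) h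

/-- The genus of a based matrix over an integral domain is
a homology invariant: homologous based matrices have equal genus. -/
theorem bmGenus_homology_invariant {R : Type*} [CommRing R] [IsDomain R]
    (T T' : PreBM R) (hT : IsBM T) (hT' : IsBM T')
    (h : Homologous T T') : bmGenus T = bmGenus T' :=
  bmGenus_homology_invariant_general T T' h
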